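/- Let α, β, δ, γ be linear maps on real sequences such that the matrix operator T(ω,x) = (αω + βx, δω + γx) is bounded on Z₂, and suppose in addition that γ restricts to a bounded operator on ℓ² (for every y ∈ ℓ², γy ∈ ℓ² and ‖γy‖₂ ≤ K‖y‖₂ for some constant K). Then δ is bounded from ℓ_f* to ℓ² (there is C′ > 0 such that for every ω ∈ ℓ_f*, δω ∈ ℓ² and ‖δω‖₂ ≤ C′‖ω‖_{ℓ_f*}), and consequently δ∘KP is bounded on ℓ² (for every y ∈ ℓ², δ(KP y) ∈ ℓ² and ‖δ(KP y)‖₂ ≤ C′‖y‖₂). -/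

import Mathlib

/-! If `T = matOp α β δ γ` is bounded on `Z₂` and `(ω, x) ∈ Z₂`, then `δ ω = (T (ω, x)).2 - γ x`
is a difference of two `ℓ²` sequences of norm `O(‖(ω, x)‖_{Z₂})`, since the second coordinate of
an element of `Z₂` is dominated by its quasinorm. Taking the infimum over all such `x` bounds `δ`
from `ℓ_f*` to `ℓ²`, and `KP y` lies in `ℓ_f*` with norm at most `‖y‖₂` (take `x = y`). -/

open scoped BigOperators

noncomputable section

/-- Real sequences. -/
abbrev RSeq : Type := ℕ → ℝ

/-- Membership in ℓ². -/
def memL2 (x : RSeq) : Prop := Summable (fun n => (x n) ^ 2)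

/-- The ℓ² norm. -/
noncomputable def l2norm (x : RSeq) : ℝ := Real.sqrt (∑' n, (x n) ^ 2)

/-- The Kalton–Peck map, defined coordinatewise.  (In Lean, `Real.log 0 = 0` and
division by zero is zero, so the conventions `0·log 0 = 0` and `KP 0 = 0` hold.) -/
noncomputable def KP (x : RSeq) : RSeq := fun n => 2 * x n * Real.log (|x n| / l2norm x)

/-- Membership in the Kalton–Peck space Z₂. -/
def memZ2 (u : RSeq × RSeq) : Prop := memL2 u.2 ∧ memL2 (u.1 - KP u.2)

/-- The Z₂ quasinorm. -/
noncomputable def Z2norm (u : RSeq × RSeq) : ℝ := l2norm (u.1 - KP u.2) + l2norm u.2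

/-- A map on pairs of sequences is bounded on Z₂. -/
def BoundedOnZ2 (T : RSeq × RSeq → RSeq × RSeq) : Prop :=
  (∀ u, memZ2 u → memZ2 (T u)) ∧ ∃ C : ℝ, ∀ u, memZ2 u → Z2norm (T u) ≤ C * Z2norm u

/-- The matrix operator associated to four linear maps on sequences. -/
def matOp (α β δ γ : RSeq →ₗ[ℝ] RSeq) : RSeq × RSeq → RSeq × RSeq :=
  fun u => (α u.1 + β u.2, δ u.1 + γ u.2)

/-- Membership in the Orlicz space ℓ_f = Dom KP. -/
def memLf (x : RSeq) : Prop := memL2 x ∧ memL2 (KP x)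

/-- The ℓ_f quasinorm. -/
noncomputable def lfNorm (x : RSeq) : ℝ := l2norm (KP x) + l2norm x

/-- Membership in ℓ_f* = Ran KP. -/
def memLfStar (ω : RSeq) : Prop := ∃ x : RSeq, memL2 x ∧ memL2 (ω - KP x)

/-- The ℓ_f* quasinorm. -/
noncomputable def lfStarNorm (ω : RSeq) : ℝ :=
  sInf {r : ℝ | ∃ x : RSeq, memL2 x ∧ memL2 (ω - KP x) ∧ r = l2norm (ω - KP x) + l2norm x}

/-- A bounded map on Z₂ is strictly singular if every linear subspace of Z₂ on which it is
bounded below is finite dimensional. -/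
def StrictlySingular (T : RSeq × RSeq → RSeq × RSeq) : Prop :=
  ∀ V : Submodule ℝ (RSeq × RSeq), (∀ v ∈ V, memZ2 v) →
    (∃ c > 0, ∀ v ∈ V, c * Z2norm v ≤ Z2norm (T v)) → FiniteDimensional ℝ V

/-- A set of sequences is totally bounded (relatively compact) for the ℓ² norm. -/
def l2TotallyBounded (A : Set RSeq) : Prop :=
  ∀ ε > 0, ∃ S : Set RSeq, S.Finite ∧
    ∀ a ∈ A, ∃ s ∈ S, memL2 (a - s) ∧ l2norm (a - s) < ε

/-- A map on Z₂ is compact if the image of the unit ball is totally bounded for the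
Z₂ quasinorm. -/
def CompactOnZ2 (T : RSeq × RSeq → RSeq × RSeq) : Prop :=
  ∀ ε > 0, ∃ S : Set (RSeq × RSeq), S.Finite ∧
    ∀ u, memZ2 u → Z2norm u ≤ 1 → ∃ s ∈ S, memZ2 (T u - s) ∧ Z2norm (T u - s) < ε

/-! If `T = matOp α β δ γ` is bounded on `Z₂` and `(ω, x) ∈ Z₂`, then `δ ω = (T (ω, x)).2 - γ x`
is a difference of two `ℓ²` sequences of norm `O(‖(ω, x)‖_{Z₂})`, since the second coordinate of
an element of `Z₂` is dominated by its quasinorm. Taking the infimum over all such `x` bounds `δ`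
from `ℓ_f*` to `ℓ²`, and `KP y` lies in `ℓ_f*` with norm at most `‖y‖₂` (take `x = y`). -/

lemma memL2_iff_memℓp {x : RSeq} : memL2 x ↔ Memℓp x 2 := by
  rw [memℓp_gen_iff (by norm_num)]
  exact summable_congr fun n => by simp

lemma l2norm_eq_norm {x : RSeq} (hx : memL2 x) :
    l2norm x = ‖(⟨x, memL2_iff_memℓp.mp hx⟩ : lp (fun _ : ℕ => ℝ) 2)‖ := by
  rw [lp.norm_eq_tsum_rpow (by norm_num)]
  simp [l2norm, Real.sqrt_eq_rpow]

lemma l2norm_nonneg (x : RSeq) : 0 ≤ l2norm x := Real.sqrt_nonneg _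

lemma l2norm_zero : l2norm 0 = 0 := by simp [l2norm]

lemma memL2.sub {x y : RSeq} (hx : memL2 x) (hy : memL2 y) : memL2 (x - y) :=
  memL2_iff_memℓp.mpr ((memL2_iff_memℓp.mp hx).sub (memL2_iff_memℓp.mp hy))

lemma l2norm_sub_le {x y : RSeq} (hx : memL2 x) (hy : memL2 y) :
    l2norm (x - y) ≤ l2norm x + l2norm y := by
  rw [l2norm_eq_norm hx, l2norm_eq_norm hy, l2norm_eq_norm (hx.sub hy)]
  exact norm_sub_le (⟨x, _⟩ : lp (fun _ : ℕ => ℝ) 2) ⟨y, _⟩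

lemma l2norm_snd_le_Z2norm (u : RSeq × RSeq) : l2norm u.2 ≤ Z2norm u :=
  le_add_of_nonneg_left (l2norm_nonneg _)

lemma Z2norm_nonneg (u : RSeq × RSeq) : 0 ≤ Z2norm u :=
  add_nonneg (l2norm_nonneg _) (l2norm_nonneg _)

lemma BoundedOnZ2.exists_pos_bound_lowerLeft {α β δ γ : RSeq →ₗ[ℝ] RSeq}
    (hT : BoundedOnZ2 (matOp α β δ γ))
    (hγ : ∃ K : ℝ, ∀ y : RSeq, memL2 y → memL2 (γ y) ∧ l2norm (γ y) ≤ K * l2norm y) :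
    ∃ C > (0 : ℝ), ∀ u, memZ2 u → memL2 (δ u.1) ∧ l2norm (δ u.1) ≤ C * Z2norm u := by
  obtain ⟨hTmem, C, hC⟩ := hT
  obtain ⟨K, hK⟩ := hγ
  refine ⟨max C 0 + max K 0 + 1, by positivity, fun u hu => ?_⟩
  have hTu : memL2 (matOp α β δ γ u).2 := (hTmem u hu).1
  obtain ⟨hγu, hγu_le⟩ := hK u.2 hu.1
  have hδ : δ u.1 = (matOp α β δ γ u).2 - γ u.2 := (add_sub_cancel_right _ _).symm
  have hZ := Z2norm_nonneg u
  refine ⟨hδ ▸ hTu.sub hγu, ?_⟩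
  calc l2norm (δ u.1) ≤ l2norm (matOp α β δ γ u).2 + l2norm (γ u.2) :=
        hδ ▸ l2norm_sub_le hTu hγu
    _ ≤ C * Z2norm u + K * l2norm u.2 :=
        add_le_add ((l2norm_snd_le_Z2norm _).trans (hC u hu)) hγu_le
    _ ≤ max C 0 * Z2norm u + max K 0 * Z2norm u := by
        gcongr
        · exact le_max_left C 0
        · exact l2norm_nonneg _
        · exact le_max_left K 0
        · exact l2norm_snd_le_Z2norm u
    _ ≤ (max C 0 + max K 0 + 1) * Z2norm u := by nlinarith

lemma le_mul_lfStarNorm {ω : RSeq} {a C : ℝ} (hC : 0 < C) (hω : memLfStar ω)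
    (h : ∀ x, memZ2 (ω, x) → a ≤ C * Z2norm (ω, x)) : a ≤ C * lfStarNorm ω := by
  obtain ⟨x₀, hx₀, hωx₀⟩ := hω
  rw [← div_le_iff₀' hC]
  refine le_csInf ⟨_, x₀, hx₀, hωx₀, rfl⟩ ?_
  rintro r ⟨x, hx, hωx, rfl⟩
  exact (div_le_iff₀' hC).mpr (h x ⟨hx, hωx⟩)

lemma memZ2_KP_self {y : RSeq} (hy : memL2 y) : memZ2 (KP y, y) :=
  ⟨hy, by simp [memL2]⟩

lemma lfStarNorm_KP_le {y : RSeq} (hy : memL2 y) : lfStarNorm (KP y) ≤ l2norm y := by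
  refine csInf_le ⟨0, ?_⟩ ⟨y, hy, (memZ2_KP_self hy).2, by simp [l2norm_zero]⟩
  rintro r ⟨x, -, -, rfl⟩
  exact Z2norm_nonneg (KP y, x)

/-- If the matrix operator is bounded on Z₂ and γ restricts to a bounded
operator on ℓ², then δ is bounded from ℓ_f* to ℓ², and consequently δ∘KP is bounded on ℓ². -/
theorem stmt_6 (α β δ γ : RSeq →ₗ[ℝ] RSeq)
    (hT : BoundedOnZ2 (matOp α β δ γ))
    (hγ : ∃ K : ℝ, ∀ y : RSeq, memL2 y → memL2 (γ y) ∧ l2norm (γ y) ≤ K * l2norm y) :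
    ∃ C > (0 : ℝ),
      (∀ ω : RSeq, memLfStar ω → memL2 (δ ω) ∧ l2norm (δ ω) ≤ C * lfStarNorm ω) ∧
      (∀ y : RSeq, memL2 y → memL2 (δ (KP y)) ∧ l2norm (δ (KP y)) ≤ C * l2norm y) := by
  obtain ⟨C, hC, hδ⟩ := hT.exists_pos_bound_lowerLeft hγ
  have hLfStar : ∀ ω : RSeq, memLfStar ω → memL2 (δ ω) ∧ l2norm (δ ω) ≤ C * lfStarNorm ω := by
    intro ω hω
    obtain ⟨x, hx, hωx⟩ := hω
    exact ⟨(hδ (ω, x) ⟨hx, hωx⟩).1,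
      le_mul_lfStarNorm hC ⟨x, hx, hωx⟩ fun x' hx' => (hδ (ω, x') hx').2⟩
  refine ⟨C, hC, hLfStar, fun y hy => ?_⟩
  obtain ⟨hmem, hle⟩ := hLfStar (KP y) ⟨y, memZ2_KP_self hy⟩
  exact ⟨hmem, hle.trans (mul_le_mul_of_nonneg_left (lfStarNorm_KP_le hy) hC.le)⟩
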